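/- With the same setup, the second derivative at t=0 of the pulled-back unit normal N(r) = n_r∘(Id+r) satisfies ∂²N[0; ξ₁,ξ₂] = [∇_Γ ξ₂][∇_Γ ξ₁]n + [∇_Γ ξ₁][∇_Γ ξ₂]n − ([∇_Γ ξ₁]n · [∇_Γ ξ₂]n) n. -/

import Mathlib

/-!
Write `A = Mᵀ`. Since `adjugate (1 + t • M) = 1 + t • (trace M • 1 - M) + t² • adjugate M` in
dimension three, the cofactor normal `ω_t` is a quadratic curve `ν + t • b + t² • c`, and the
second derivative of `ω_t / ‖ω_t‖` at `0` is an explicit expression in `ν, b, c`. Expanding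
`c = adjugate A *ᵥ ν` by Cayley–Hamilton, all terms involving `trace A` and `trace (A * A)`
cancel, leaving the quadratic form `2 G² ν - ‖G ν‖² ν` of the tangential gradient
`G = (1 - ν νᵀ) A`; the theorem is its polarization.
-/

open Matrix Filter Topology

section SecondDerivative

variable {E : Type*} [NormedAddCommGroup E] [NormedSpace ℝ E]

theorem iteratedDeriv_two_eq_of_hasDerivAt {f f' : ℝ → E} {f'' : E} {x : ℝ}
    (hf : ∀ᶠ t in 𝓝 x, HasDerivAt f (f' t) t) (hf' : HasDerivAt f' f'' x) :
    iteratedDeriv 2 f x = f'' := by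
  have hderiv : deriv f =ᶠ[𝓝 x] f' := hf.mono fun t ht => ht.deriv
  rw [iteratedDeriv_succ, iteratedDeriv_one, hderiv.deriv_eq, hf'.deriv]

theorem iteratedDeriv_two_smul {g g' : ℝ → ℝ} {w w' : ℝ → E} {g'' : ℝ} {w'' : E} {x : ℝ}
    (hg : ∀ᶠ t in 𝓝 x, HasDerivAt g (g' t) t) (hg' : HasDerivAt g' g'' x)
    (hw : ∀ᶠ t in 𝓝 x, HasDerivAt w (w' t) t) (hw' : HasDerivAt w' w'' x) :
    iteratedDeriv 2 (fun t => g t • w t) x = g'' • w x + (2 * g' x) • w' x + g x • w'' := by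
  refine iteratedDeriv_two_eq_of_hasDerivAt (f' := fun t => g t • w' t + g' t • w t)
    ((hg.and hw).mono fun t ⟨hgt, hwt⟩ => hgt.smul hwt) ?_
  exact ((hg.self_of_nhds.smul hw').add (hg'.smul hw.self_of_nhds)).congr_deriv (by module)

end SecondDerivative

theorem HasDerivAt.sqrt_inv {S : ℝ → ℝ} {S' t : ℝ} (hS : HasDerivAt S S' t) (hpos : 0 < S t) :
    HasDerivAt (fun s => (√(S s))⁻¹) (-S' / (2 * √(S t) ^ 3)) t :=
  ((hS.sqrt hpos.ne').inv (by positivity)).congr_deriv (by ring)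

theorem HasDerivAt.neg_div_two_mul_sqrt_pow_three {S S' : ℝ → ℝ} {S'' x : ℝ}
    (hS : HasDerivAt S (S' x) x) (hS' : HasDerivAt S' S'' x) (hx : S x = 1) :
    HasDerivAt (fun s => -S' s / (2 * √(S s) ^ 3)) (3 / 4 * S' x ^ 2 - S'' / 2) x := by
  have hden := ((hS.sqrt (by rw [hx]; exact one_ne_zero)).fun_pow 3).const_mul 2
  refine (hS'.neg.div hden (by rw [hx]; norm_num)).congr_deriv ?_
  simp only [hx, Real.sqrt_one, Pi.neg_apply]
  ring

theorem HasDerivAt.dotProduct {ι 𝕜 : Type*} [Fintype ι] [NontriviallyNormedField 𝕜]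
    {f g : 𝕜 → ι → 𝕜} {f' g' : ι → 𝕜} {t : 𝕜}
    (hf : HasDerivAt f f' t) (hg : HasDerivAt g g' t) :
    HasDerivAt (fun s => f s ⬝ᵥ g s) (f' ⬝ᵥ g t + f t ⬝ᵥ g') t := by
  have := HasDerivAt.fun_sum (u := Finset.univ) fun i _ =>
    (hasDerivAt_pi.1 hf i).fun_mul (hasDerivAt_pi.1 hg i)
  simp only [Finset.sum_add_distrib] at this
  exact this

theorem iteratedDeriv_two_normalize_quadratic {ι : Type*} [Fintype ι] (a b c : ι → ℝ)
    (ha : a ⬝ᵥ a = 1) :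
    iteratedDeriv 2 (fun t : ℝ =>
        (√((a + t • b + t ^ 2 • c) ⬝ᵥ (a + t • b + t ^ 2 • c)))⁻¹ • (a + t • b + t ^ 2 • c)) 0
      = (2 : ℝ) • c - (2 * (a ⬝ᵥ b)) • b
          + (3 * (a ⬝ᵥ b) ^ 2 - (b ⬝ᵥ b + 2 * (a ⬝ᵥ c))) • a := by
  set ω : ℝ → ι → ℝ := fun t => a + t • b + t ^ 2 • c
  set ω' : ℝ → ι → ℝ := fun t => b + (2 * t) • c
  have hω (t : ℝ) : HasDerivAt ω (ω' t) t :=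
    (((hasDerivAt_id t).smul_const b).const_add a).add
      ((hasDerivAt_pow 2 t).smul_const c) |>.congr_deriv (by simp [ω'])
  have hω' (t : ℝ) : HasDerivAt ω' ((2 : ℝ) • c) t :=
    (((hasDerivAt_id t).const_mul 2).smul_const c).const_add b |>.congr_deriv (by simp)
  set S : ℝ → ℝ := fun t => ω t ⬝ᵥ ω t
  set S' : ℝ → ℝ := fun t => ω' t ⬝ᵥ ω t + ω t ⬝ᵥ ω' t
  have hS (t : ℝ) : HasDerivAt S (S' t) t := (hω t).dotProduct (hω t)
  have hS' : HasDerivAt S' (2 * (b ⬝ᵥ b + 2 * (a ⬝ᵥ c))) 0 :=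
    ((hω' 0).dotProduct (hω 0)).add ((hω 0).dotProduct (hω' 0)) |>.congr_deriv (by
      simp only [ω, ω', zero_smul, add_zero, ne_eq, OfNat.ofNat_ne_zero, not_false_eq_true,
        zero_pow, smul_dotProduct, dotProduct_smul, dotProduct_comm c a, smul_eq_mul, mul_zero]
      ring)
  have hS0 : S 0 = 1 := by simpa [S, ω] using ha
  have hS'0 : S' 0 = 2 * (a ⬝ᵥ b) := by
    simp only [S', ω, ω', dotProduct_add, add_dotProduct, dotProduct_comm b a, smul_dotProduct,
      smul_eq_mul, dotProduct_smul, mul_zero, zero_mul, add_zero, ne_eq, OfNat.ofNat_ne_zero,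
      not_false_eq_true, zero_pow]
    ring
  have hSpos : ∀ᶠ t in 𝓝 0, 0 < S t :=
    continuousAt_const.eventually_lt (hS 0).continuousAt (by rw [hS0]; exact one_pos)
  have hg : ∀ᶠ t in 𝓝 0, HasDerivAt (fun s => (√(S s))⁻¹) (-S' t / (2 * √(S t) ^ 3)) t :=
    hSpos.mono fun t ht => (hS t).sqrt_inv ht
  rw [iteratedDeriv_two_smul hg ((hS 0).neg_div_two_mul_sqrt_pow_three hS' hS0)
    (.of_forall hω) (hω' 0), hS0, hS'0]
  simp only [Real.sqrt_one, ω, ω']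
  module

theorem adjugate_one_add_smul_fin_three {R : Type*} [CommRing R] (M : Matrix (Fin 3) (Fin 3) R)
    (t : R) :
    adjugate (1 + t • M) = 1 + t • (trace M • 1 - M) + t ^ 2 • adjugate M := by
  ext i j
  fin_cases i <;> fin_cases j <;>
    simp [adjugate_fin_three, trace_fin_three, one_apply] <;> ring

theorem adjugate_fin_three_eq_trace (A : Matrix (Fin 3) (Fin 3) ℝ) :
    adjugate A = ((trace A ^ 2 - trace (A * A)) / 2) • 1 - trace A • A + A * A := by
  ext i j
  fin_cases i <;> fin_cases j <;>
    simp [adjugate_fin_three, trace_fin_three, one_apply, mul_apply, Fin.sum_univ_three] <;> ring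

theorem one_sub_vecMulVec_mulVec {ι R : Type*} [Fintype ι] [DecidableEq ι] [CommRing R]
    (ν x : ι → R) :
    (1 - vecMulVec ν ν) *ᵥ x = x - (ν ⬝ᵥ x) • ν := by
  rw [sub_mulVec, one_mulVec, vecMulVec_mulVec, op_smul_eq_smul]

/-- The diagonal `∂²N[0; ξ, ξ]`, written in terms of `G = [∇_Γ ξ]`. -/
def normalSecondVariation {ι : Type*} [Fintype ι] (ν : ι → ℝ) (G : Matrix ι ι ℝ) : ι → ℝ :=
  (2 : ℝ) • (G * G) *ᵥ ν - (G *ᵥ ν ⬝ᵥ G *ᵥ ν) • ν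

theorem normalSecondVariation_eq_of_fin_three (A G : Matrix (Fin 3) (Fin 3) ℝ)
    (ν b c : Fin 3 → ℝ) (hν : ν ⬝ᵥ ν = 1) (hb : b = trace A • ν - A *ᵥ ν)
    (hc : c = adjugate A *ᵥ ν) (hG : G = (1 - vecMulVec ν ν) * A) :
    normalSecondVariation ν G
      = (2 : ℝ) • c - (2 * (ν ⬝ᵥ b)) • b
          + (3 * (ν ⬝ᵥ b) ^ 2 - (b ⬝ᵥ b + 2 * (ν ⬝ᵥ c))) • ν := by
  have hGx (x : Fin 3 → ℝ) : G *ᵥ x = A *ᵥ x - (ν ⬝ᵥ A *ᵥ x) • ν := by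
    rw [hG, ← mulVec_mulVec, one_sub_vecMulVec_mulVec]
  have hc' : c = ((trace A ^ 2 - trace (A * A)) / 2) • ν - trace A • A *ᵥ ν
      + A *ᵥ (A *ᵥ ν) := by
    simp only [hc, adjugate_fin_three_eq_trace, sub_mulVec, add_mulVec, smul_mulVec,
      one_mulVec, mulVec_mulVec]
  rw [normalSecondVariation, ← mulVec_mulVec, hGx, hGx, mulVec_sub, mulVec_smul, hc', hb]
  simp only [dotProduct_sub, dotProduct_add, sub_dotProduct, dotProduct_smul,
    smul_dotProduct, smul_eq_mul, hν, dotProduct_comm (A *ᵥ ν) ν]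
  module

theorem iteratedDeriv_two_cofactor_normal (M : Matrix (Fin 3) (Fin 3) ℝ) (ν : Fin 3 → ℝ)
    (hν : ν ⬝ᵥ ν = 1) :
    iteratedDeriv 2 (fun t : ℝ =>
        (√(∑ i, ((adjugate (1 + t • M))ᵀ *ᵥ ν) i ^ 2))⁻¹ • (adjugate (1 + t • M))ᵀ *ᵥ ν) 0
      = normalSecondVariation ν ((1 - vecMulVec ν ν) * Mᵀ) := by
  have hω (t : ℝ) : (adjugate (1 + t • M))ᵀ *ᵥ ν
      = ν + t • (trace Mᵀ • ν - Mᵀ *ᵥ ν) + t ^ 2 • (adjugate Mᵀ *ᵥ ν) := by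
    rw [adjugate_one_add_smul_fin_three, trace_transpose, ← adjugate_transpose]
    simp only [transpose_add, transpose_smul, transpose_sub, transpose_one, add_mulVec,
      smul_mulVec, sub_mulVec, one_mulVec]
  have hsum (v : Fin 3 → ℝ) : ∑ i, v i ^ 2 = v ⬝ᵥ v := by simp only [dotProduct, sq]
  simp only [hsum, hω]
  rw [iteratedDeriv_two_normalize_quadratic _ _ _ hν,
    normalSecondVariation_eq_of_fin_three Mᵀ _ ν _ _ hν rfl rfl rfl]

theorem normalSecondVariation_polarization {ι : Type*} [Fintype ι] (ν : ι → ℝ)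
    (G₁ G₂ : Matrix ι ι ℝ) :
    (1 / 2 : ℝ) • (normalSecondVariation ν (G₁ + G₂) - normalSecondVariation ν G₁
        - normalSecondVariation ν G₂)
      = (G₂ * G₁) *ᵥ ν + (G₁ * G₂) *ᵥ ν - (G₁ *ᵥ ν ⬝ᵥ G₂ *ᵥ ν) • ν := by
  simp only [normalSecondVariation, add_mul, mul_add, add_mulVec, dotProduct_add,
    add_dotProduct, dotProduct_comm (G₂ *ᵥ ν) (G₁ *ᵥ ν)]
  module

/-- Pointwise second shape derivative of the pulled-back unit normal:
with `Mᵢ = Dξᵢ(x)`, unit normal `ν`, `Nf M t = ω_t/‖ω_t‖`, `ω_t = adjugate(I+tM)ᵀ ν`, and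
`Gᵢ = [∇_Γ ξᵢ] = (I − ννᵀ) Mᵢᵀ`, the polarized second derivative at `0` equals
`G₂G₁ν + G₁G₂ν − ⟨G₁ν, G₂ν⟩ ν`. -/
theorem stmt8 (M₁ M₂ : Matrix (Fin 3) (Fin 3) ℝ) (ν : Fin 3 → ℝ)
    (hν : ∑ i, ν i ^ 2 = 1)
    (Nf : Matrix (Fin 3) (Fin 3) ℝ → ℝ → (Fin 3 → ℝ))
    (hNf : ∀ M t, Nf M t =
      (Real.sqrt (∑ i, ((Matrix.adjugate (1 + t • M)).transpose.mulVec ν i) ^ 2))⁻¹ •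
        (Matrix.adjugate (1 + t • M)).transpose.mulVec ν)
    (G₁ G₂ : Matrix (Fin 3) (Fin 3) ℝ)
    (hG₁ : G₁ = (1 - Matrix.vecMulVec ν ν) * M₁.transpose)
    (hG₂ : G₂ = (1 - Matrix.vecMulVec ν ν) * M₂.transpose) :
    (1 / 2 : ℝ) •
        (iteratedDeriv 2 (Nf (M₁ + M₂)) 0 - iteratedDeriv 2 (Nf M₁) 0
          - iteratedDeriv 2 (Nf M₂) 0)
      = (G₂ * G₁).mulVec ν + (G₁ * G₂).mulVec ν
          - (G₁.mulVec ν ⬝ᵥ G₂.mulVec ν) • ν := by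
  have hν' : ν ⬝ᵥ ν = 1 := by simpa only [dotProduct, sq] using hν
  have hN (M : Matrix (Fin 3) (Fin 3) ℝ) :
      iteratedDeriv 2 (Nf M) 0 = normalSecondVariation ν ((1 - vecMulVec ν ν) * Mᵀ) := by
    rw [show Nf M = _ from funext (hNf M), iteratedDeriv_two_cofactor_normal M ν hν']
  rw [hN, hN, hN, transpose_add, mul_add, ← hG₁, ← hG₂]
  exact normalSecondVariation_polarization ν G₁ G₂
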